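/- Let m, n ≥ 1 be integers and let K_m □ K_n denote the Cartesian (box) product of the complete graphs K_m and K_n. Then the closed neighborhood complex N[K_m □ K_n] is simply connected in the combinatorial sense: every edge-path in N[K_m □ K_n] from the vertex (1,1) to itself is edge-path homotopic to the constant edge-path at (1,1); equivalently, the edge-path group E(N[K_m □ K_n], (1,1)) is trivial. -/

import Mathlib

/-- An edge-path of length `len` in a simplicial complex `K` (a family of finite subsets of
a vertex set `V`, with a simplex encoded as a finite `Set V`) from `v` to `w`: a sequence of
vertices (encoded as a function `ℕ → V` that is constantly `w` from index `len` on) such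
that each pair of consecutive vertices spans a simplex of `K`. -/
structure EPath {V : Type*} (K : Set (Set V)) (v w : V) where
  len : ℕ
  toFun : ℕ → V
  source : toFun 0 = v
  target : toFun len = w
  edge : ∀ i < len, ({toFun i, toFun (i + 1)} : Set V) ∈ K
  junk : ∀ i, len ≤ i → toFun i = w

namespace EPath

variable {V : Type*} {K : Set (Set V)}

/-- The constant edge-path of length 0 at a vertex. -/
def refl (K : Set (Set V)) (v : V) : EPath K v v where
  len := 0
  toFun := fun _ => v
  source := rfl
  target := rfl
  edge := fun i hi => absurd hi (Nat.not_lt_zero i)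
  junk := fun _ _ => rfl

/-- Concatenation of composable edge-paths. -/
def concat {u v w : V} (γ : EPath K u v) (δ : EPath K v w) : EPath K u w where
  len := γ.len + δ.len
  toFun := fun i => if i < γ.len then γ.toFun i else δ.toFun (i - γ.len)
  source := by
    by_cases h : 0 < γ.len
    · simpa [h] using γ.source
    · have h0 : γ.len = 0 := by omega
      have huv : u = v := by
        have h1 := γ.source; have h2 := γ.target
        rw [h0] at h2; rw [h1] at h2; exact h2
      show (if 0 < γ.len then γ.toFun 0 else δ.toFun (0 - γ.len)) = u
      rw [if_neg h, Nat.zero_sub, δ.source]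
      exact huv.symm
  target := by
    have h : ¬ γ.len + δ.len < γ.len := by omega
    have h2 : γ.len + δ.len - γ.len = δ.len := by omega
    simp only [h, if_false, h2, δ.target]
  edge := by
    intro i hi
    by_cases h1 : i + 1 < γ.len
    · have h0 : i < γ.len := by omega
      simpa [h0, h1] using γ.edge i h0
    · by_cases h0 : i < γ.len
      · have he : i + 1 = γ.len := by omega
        have h3 : i + 1 - γ.len = 0 := by omega
        have hval : δ.toFun (i + 1 - γ.len) = γ.toFun (i + 1) := by
          rw [h3, δ.source, he, γ.target]
        simp only [h0, if_true, h1, if_false, hval]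
        exact γ.edge i h0
      · have h3 : i + 1 - γ.len = (i - γ.len) + 1 := by omega
        simp only [h0, if_false, h1, if_false, h3]
        exact δ.edge (i - γ.len) (by omega)
  junk := by
    intro i hi
    have h : ¬ i < γ.len := by omega
    simp only [h, if_false]
    exact δ.junk _ (by omega)

end EPath

/-- `γ'` is obtained from the edge-path `γ` by deleting the vertex at position `j`. -/
def EDel {V : Type*} {K : Set (Set V)} {v w : V} (γ γ' : EPath K v w) (j : ℕ) : Prop :=
  γ.len = γ'.len + 1 ∧ (∀ i < j, γ'.toFun i = γ.toFun i) ∧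
    (∀ i, j ≤ i → γ'.toFun i = γ.toFun (i + 1))

/-- One step of edge-path homotopy: delete a vertex `v_j` with `1 ≤ j` such that either
(a) `v_{j-1} = v_j`, or (b) `{v_{j-1}, v_j, v_{j+1}}` is a simplex of `K`. -/
def EHomStep {V : Type*} (K : Set (Set V)) {v w : V} (γ γ' : EPath K v w) : Prop :=
  (∃ j, 1 ≤ j ∧ j ≤ γ.len ∧ γ.toFun (j - 1) = γ.toFun j ∧ EDel γ γ' j) ∨
  (∃ j, 1 ≤ j ∧ j + 1 ≤ γ.len ∧
    ({γ.toFun (j - 1), γ.toFun j, γ.toFun (j + 1)} : Set V) ∈ K ∧ EDel γ γ' j)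

/-- Edge-path homotopy: the smallest equivalence relation containing the elementary
deletions (a) and (b).  The edge-path group `E(K,v)` is the quotient of the set of
edge-paths from `v` to `v` by this relation. -/
def EHom {V : Type*} (K : Set (Set V)) {v w : V} : EPath K v w → EPath K v w → Prop :=
  Relation.EqvGen (EHomStep K)

/-- The closed neighborhood `N_G[v] = {v} ∪ N_G(v)` of a vertex in a simple graph. -/
def closedNbhd {V : Type*} (G : SimpleGraph V) (v : V) : Set V :=
  insert v (G.neighborSet v)

/-- The closed neighborhood complex `N[G]`: the family of finite vertex sets contained in
the closed neighborhood of some vertex. -/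
def closedNbhdComplex {V : Type*} (G : SimpleGraph V) : Set (Set V) :=
  {σ : Set V | σ.Finite ∧ ∃ v : V, σ ⊆ closedNbhd G v}

/-!
In `N[K_m □ K_n]` a set of vertices is a simplex as soon as all of its elements lie in the row
or the column through one vertex. So for vertices `v, a, b` the corner `x = (a₁, b₂)` spans
the three triangles `{v, a, x}`, `{a, x, b}` and `{v, x, b}`: in a loop `v, a, b, …` one may
insert `x` between `a` and `b`, then delete `a` and then `x`, which shortens the loop by one.
Induction on the length contracts every loop.
-/

namespace EPath

variable {V : Type*} {K : Set (Set V)} {v w : V}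

theorem eq_refl_of_len_eq_zero : ∀ γ : EPath K v v, γ.len = 0 → γ = refl K v
  | ⟨_, _, _, _, _, hjunk⟩, rfl => by
    congr
    exact funext fun i => hjunk i i.zero_le

def insertAt (γ : EPath K v w) (j : ℕ) (x : V) (hj : 1 ≤ j) (hjlen : j ≤ γ.len)
    (hprev : ({γ.toFun (j - 1), x} : Set V) ∈ K) (hnext : ({x, γ.toFun j} : Set V) ∈ K) :
    EPath K v w where
  len := γ.len + 1
  toFun i := if i < j then γ.toFun i else if i = j then x else γ.toFun (i - 1)
  source := by rw [if_pos (by omega), γ.source]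
  target := by rw [if_neg (by omega), if_neg (by omega), Nat.add_sub_cancel, γ.target]
  edge i hi := by
    rcases lt_trichotomy i j with hij | rfl | hij
    · rcases Nat.lt_or_ge (i + 1) j with hij' | hij'
      · rw [if_pos hij, if_pos hij']
        exact γ.edge i (by omega)
      · obtain rfl : i = j - 1 := by omega
        rwa [if_pos hij, if_neg (by omega), if_pos (by omega)]
    · rwa [if_neg (lt_irrefl i), if_pos rfl, if_neg (by omega), if_neg (by omega),
        Nat.add_sub_cancel]
    · obtain ⟨k, rfl⟩ : ∃ k, i = k + 1 := ⟨i - 1, by omega⟩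
      rw [if_neg (by omega), if_neg (by omega), if_neg (by omega), if_neg (by omega),
        Nat.add_sub_cancel, Nat.add_sub_cancel]
      exact γ.edge k (by omega)
  junk i hi := by rw [if_neg (by omega), if_neg (by omega), γ.junk _ (by omega)]

def deleteAt (γ : EPath K v w) (j : ℕ) (hj : 1 ≤ j) (hjlen : j < γ.len)
    (hedge : ({γ.toFun (j - 1), γ.toFun (j + 1)} : Set V) ∈ K) : EPath K v w where
  len := γ.len - 1
  toFun i := if i < j then γ.toFun i else γ.toFun (i + 1)
  source := by rw [if_pos (by omega), γ.source]
  target := by rw [if_neg (by omega), Nat.sub_add_cancel (by omega), γ.target]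
  edge i hi := by
    rcases Nat.lt_or_ge (i + 1) j with hij | hij
    · rw [if_pos (by omega), if_pos hij]
      exact γ.edge i (by omega)
    · rcases Nat.lt_or_ge i j with hij' | hij'
      · obtain rfl : i = j - 1 := by omega
        rwa [if_pos hij', if_neg (by omega), Nat.sub_add_cancel hj]
      · rw [if_neg (by omega), if_neg (by omega)]
        exact γ.edge (i + 1) (by omega)
  junk i hi := by rw [if_neg (by omega), γ.junk _ (by omega)]

theorem eHomStep_insertAt (γ : EPath K v w) (j : ℕ) (x : V) (hj : 1 ≤ j) (hjlen : j ≤ γ.len)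
    (hprev : ({γ.toFun (j - 1), x} : Set V) ∈ K) (hnext : ({x, γ.toFun j} : Set V) ∈ K)
    (htri : ({γ.toFun (j - 1), x, γ.toFun j} : Set V) ∈ K) :
    EHomStep K (γ.insertAt j x hj hjlen hprev hnext) γ := by
  refine Or.inr ⟨j, hj, by simp only [insertAt]; omega, ?_, rfl, fun i hi => ?_, fun i hi => ?_⟩
  · simp only [insertAt]
    rwa [if_pos (by omega), if_neg (lt_irrefl j), if_true, if_neg (by omega),
      if_neg (by omega), Nat.add_sub_cancel]
  · simp only [insertAt, if_pos hi]
  · simp only [insertAt]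
    rw [if_neg (by omega), if_neg (by omega), Nat.add_sub_cancel]

theorem eHomStep_deleteAt (γ : EPath K v w) (j : ℕ) (hj : 1 ≤ j) (hjlen : j < γ.len)
    (hedge : ({γ.toFun (j - 1), γ.toFun (j + 1)} : Set V) ∈ K)
    (htri : ({γ.toFun (j - 1), γ.toFun j, γ.toFun (j + 1)} : Set V) ∈ K) :
    EHomStep K γ (γ.deleteAt j hj hjlen hedge) := by
  refine Or.inr ⟨j, hj, hjlen, htri, ?_, fun i hi => ?_, fun i hi => ?_⟩
  · simp only [deleteAt]; omega
  · simp only [deleteAt, if_pos hi]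
  · simp only [deleteAt]
    rw [if_neg (by omega)]

theorem eHomStep_refl_of_len_eq_one (γ : EPath K v v) (h : γ.len = 1) :
    EHomStep K γ (refl K v) := by
  refine Or.inl ⟨1, le_rfl, h.ge, ?_, h, fun i hi => ?_, fun i _ => (γ.junk _ (by omega)).symm⟩
  · rw [← h, γ.target, Nat.sub_self, γ.source]
  · obtain rfl : i = 0 := by omega
    exact γ.source.symm

theorem exists_eHom_len_add_one_eq (hK : IsLowerSet K) (γ : EPath K v w) (hlen : 2 ≤ γ.len)
    (x : V) (h₁ : ({γ.toFun 0, γ.toFun 1, x} : Set V) ∈ K)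
    (h₂ : ({γ.toFun 1, x, γ.toFun 2} : Set V) ∈ K) (h₃ : ({γ.toFun 0, x, γ.toFun 2} : Set V) ∈ K) :
    ∃ γ' : EPath K v w, γ'.len + 1 = γ.len ∧ EHom K γ γ' := by
  let γ₁ := γ.insertAt 2 x (by omega) hlen (hK (by simp [Set.insert_subset_iff]) h₂)
    (hK (by simp) h₂)
  let γ₂ := γ₁.deleteAt 1 le_rfl (by simp only [γ₁, insertAt]; omega)
    (hK (by simp [γ₁, insertAt, Set.insert_subset_iff]) h₁)
  let γ₃ := γ₂.deleteAt 1 le_rfl (by simp only [γ₂, deleteAt, γ₁, insertAt]; omega)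
    (hK (by simp [γ₂, deleteAt, γ₁, insertAt, Set.insert_subset_iff]) h₃)
  have hγ₁ : EHomStep K γ₁ γ := γ.eHomStep_insertAt 2 x _ _ _ _ h₂
  have hγ₂ : EHomStep K γ₁ γ₂ := γ₁.eHomStep_deleteAt 1 _ _ _ h₁
  have hγ₃ : EHomStep K γ₂ γ₃ := γ₂.eHomStep_deleteAt 1 _ _ _ h₃
  refine ⟨γ₃, by simp only [γ₃, γ₂, γ₁, deleteAt, insertAt]; omega, ?_⟩
  exact (Relation.EqvGen.rel _ _ hγ₁).symm.trans _ _ _ <|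
    (Relation.EqvGen.rel _ _ hγ₂).trans _ _ _ (Relation.EqvGen.rel _ _ hγ₃)

theorem eHom_refl (hK : IsLowerSet K)
    (hcone : ∀ a b, ∃ x, ({v, a, x} : Set V) ∈ K ∧ ({a, x, b} : Set V) ∈ K ∧
      ({v, x, b} : Set V) ∈ K)
    (γ : EPath K v v) : EHom K γ (refl K v) := by
  induction hn : γ.len using Nat.strong_induction_on generalizing γ with
  | _ n ih =>
    rcases n with _ | _ | n
    · rw [γ.eq_refl_of_len_eq_zero hn]
      exact .refl _
    · exact .rel _ _ (γ.eHomStep_refl_of_len_eq_one hn)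
    · obtain ⟨x, h₁, h₂, h₃⟩ := hcone (γ.toFun 1) (γ.toFun 2)
      obtain ⟨γ', hlen, hγ⟩ := γ.exists_eHom_len_add_one_eq hK (by omega) x
        (by rwa [γ.source]) h₂ (by rwa [γ.source])
      exact hγ.trans _ _ _ (ih _ (by omega) γ' rfl)

end EPath

theorem closedNbhdComplex_isLowerSet {V : Type*} (G : SimpleGraph V) :
    IsLowerSet (closedNbhdComplex G) :=
  fun _ _ hst ⟨hfin, v, hv⟩ => ⟨hfin.subset hst, v, hst.trans hv⟩

section BoxProdTop

variable {α β : Type*}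

theorem mem_closedNbhdComplex_boxProd_top {σ : Set (α × β)} (hσ : σ.Finite) (p : α) (q : β)
    (h : ∀ z ∈ σ, z.1 = p ∨ z.2 = q) :
    σ ∈ closedNbhdComplex ((⊤ : SimpleGraph α).boxProd (⊤ : SimpleGraph β)) := by
  refine ⟨hσ, (p, q), fun z hz => ?_⟩
  simp only [closedNbhd, Set.mem_insert_iff, SimpleGraph.mem_neighborSet,
    SimpleGraph.boxProd_adj, SimpleGraph.top_adj, Prod.ext_iff]
  rcases h z hz with h | h <;> tauto

theorem closedNbhdComplex_boxProd_top_cone (v a b : α × β) :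
    ∃ x, ({v, a, x} : Set (α × β)) ∈ closedNbhdComplex ((⊤ : SimpleGraph α).boxProd ⊤) ∧
      ({a, x, b} : Set (α × β)) ∈ closedNbhdComplex ((⊤ : SimpleGraph α).boxProd ⊤) ∧
      ({v, x, b} : Set (α × β)) ∈ closedNbhdComplex ((⊤ : SimpleGraph α).boxProd ⊤) := by
  refine ⟨(a.1, b.2), ?_, ?_, ?_⟩
  · refine mem_closedNbhdComplex_boxProd_top (Set.toFinite _) a.1 v.2 ?_
    rintro z (rfl | rfl | rfl) <;> simp
  · refine mem_closedNbhdComplex_boxProd_top (Set.toFinite _) a.1 b.2 ?_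
    rintro z (rfl | rfl | rfl) <;> simp
  · refine mem_closedNbhdComplex_boxProd_top (Set.toFinite _) v.1 b.2 ?_
    rintro z (rfl | rfl | rfl) <;> simp

theorem closedNbhdComplex_boxProd_top_eHom_refl (v : α × β)
    (γ : EPath (closedNbhdComplex ((⊤ : SimpleGraph α).boxProd ⊤)) v v) :
    EHom _ γ (EPath.refl _ v) :=
  γ.eHom_refl (closedNbhdComplex_isLowerSet _) (closedNbhdComplex_boxProd_top_cone v)

end BoxProdTop

/-- For `m, n ≥ 1`, the closed neighborhood complex of the Cartesian (box) product
`K_m □ K_n` of complete graphs is simply connected in the combinatorial sense: every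
edge loop at the vertex `(1,1)` (here the first vertex `(0,0)` of `Fin m × Fin n`) is
edge-path homotopic to the constant edge-path, i.e. the edge-path group
`E(N[K_m □ K_n], (1,1))` is trivial. -/
theorem closedNbhdComplex_boxProd_complete_simplyConnected
    (m n : ℕ) (hm : 1 ≤ m) (hn : 1 ≤ n) :
    (∀ γ : EPath
        (closedNbhdComplex ((⊤ : SimpleGraph (Fin m)).boxProd (⊤ : SimpleGraph (Fin n))))
        ((⟨0, hm⟩ : Fin m), (⟨0, hn⟩ : Fin n)) ((⟨0, hm⟩ : Fin m), (⟨0, hn⟩ : Fin n)),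
      EHom _ γ (EPath.refl _ ((⟨0, hm⟩ : Fin m), (⟨0, hn⟩ : Fin n)))) ∧
    (∀ c : Quot (EHom
        (closedNbhdComplex ((⊤ : SimpleGraph (Fin m)).boxProd (⊤ : SimpleGraph (Fin n))))
        (v := ((⟨0, hm⟩ : Fin m), (⟨0, hn⟩ : Fin n)))
        (w := ((⟨0, hm⟩ : Fin m), (⟨0, hn⟩ : Fin n)))),
      c = Quot.mk _ (EPath.refl _ ((⟨0, hm⟩ : Fin m), (⟨0, hn⟩ : Fin n)))) :=
  ⟨closedNbhdComplex_boxProd_top_eHom_refl _,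
    Quot.ind fun γ => Quot.sound (closedNbhdComplex_boxProd_top_eHom_refl _ γ)⟩
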